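/- arXiv:1112.3810 — 6 statements merged into one kernel-verified Lean document; each statement's English description precedes it below -/
import Mathlib

section
/- Let H be an M×K complex matrix with M ≥ K whose squared Frobenius norm equals MK, and let λ₁,…,λ_K be its singular values. Then for any p_u > 0, the sum-rate R = Σ_{k=1}^K log₂(1 + p_u λ_k²) satisfies log₂(1 + M K p_u) ≤ R ≤ K log₂(1 + M p_u). -/
/-!
The squared singular values `λ_k²` are the eigenvalues of `Hᴴ H`, so they sum to
`tr (Hᴴ H) = ‖H‖_F² = MK`. For nonnegative gains `x_k` with `∑ x_k = MK p_u`, expanding the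
product gives `1 + ∑ x_k ≤ ∏ (1 + x_k)`, which is the lower bound after taking logarithms, and
Jensen's inequality for the concave logarithm gives `∑ log (1 + x_k) ≤ K log (1 + M p_u)`.
-/

open Matrix Finset

theorem Finset.one_add_sum_le_prod_one_add {ι : Type*} (s : Finset ι) {x : ι → ℝ}
    (hx : ∀ i ∈ s, 0 ≤ x i) : 1 + ∑ i ∈ s, x i ≤ ∏ i ∈ s, (1 + x i) := by
  induction s using Finset.cons_induction with
  | empty => simp
  | cons a s _ ih =>
    rw [sum_cons, prod_cons]
    have hxa : 0 ≤ x a := hx a (mem_cons_self a s)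
    have hxs : ∀ i ∈ s, 0 ≤ x i := fun i hi => hx i (mem_cons_of_mem hi)
    nlinarith [ih hxs, mul_nonneg hxa (sum_nonneg hxs)]

namespace Real

theorem logb_one_add_sum_le_sum_logb_one_add {ι : Type*} {b : ℝ} (hb : 1 < b) (s : Finset ι)
    {x : ι → ℝ} (hx : ∀ i ∈ s, 0 ≤ x i) :
    logb b (1 + ∑ i ∈ s, x i) ≤ ∑ i ∈ s, logb b (1 + x i) := by
  rw [← logb_prod _ _ fun i hi => by linarith [hx i hi]]
  exact logb_le_logb_of_le hb (by linarith [sum_nonneg hx]) (s.one_add_sum_le_prod_one_add hx)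

theorem sum_log_le_card_mul_log_mean {ι : Type*} (s : Finset ι) {z : ι → ℝ}
    (hz : ∀ i ∈ s, 0 < z i) : ∑ i ∈ s, log (z i) ≤ #s * log ((∑ i ∈ s, z i) / #s) := by
  rcases s.eq_empty_or_nonempty with rfl | hs
  · simp
  have hcard : (0 : ℝ) < #s := by exact_mod_cast hs.card_pos
  have jensen := strictConcaveOn_log_Ioi.concaveOn.le_map_sum (t := s) (w := fun _ => (#s : ℝ)⁻¹)
    (p := z) (fun _ _ => by positivity) (by simp [hcard.ne']) hz
  simp only [smul_eq_mul, ← mul_sum] at jensen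
  rw [div_eq_inv_mul, ← div_le_iff₀' hcard, div_eq_inv_mul]
  exact jensen

theorem sum_logb_one_add_le_card_mul {ι : Type*} {b : ℝ} (hb : 1 < b) (s : Finset ι)
    {x : ι → ℝ} (hx : ∀ i ∈ s, 0 ≤ x i) {c : ℝ} (hsum : ∑ i ∈ s, x i = #s * c) :
    ∑ i ∈ s, logb b (1 + x i) ≤ #s * logb b (1 + c) := by
  rcases s.eq_empty_or_nonempty with rfl | hs
  · simp
  have hcard : (0 : ℝ) < #s := by exact_mod_cast hs.card_pos
  have hmean : (∑ i ∈ s, (1 + x i)) / #s = 1 + c := by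
    rw [sum_add_distrib, hsum, sum_const, nsmul_one]; field_simp
  have := sum_log_le_card_mul_log_mean s (z := fun i => 1 + x i) fun i hi => by
    linarith [hx i hi]
  simp only [logb, ← sum_div, mul_div_assoc']
  gcongr
  · exact (log_pos hb).le
  · rwa [hmean] at this

end Real

theorem Matrix.IsHermitian.sum_eigenvalues_conjTranspose_mul_self {𝕜 m n : Type*} [RCLike 𝕜]
    [Fintype m] [Fintype n] [DecidableEq n] {A : Matrix m n 𝕜} (hA : (Aᴴ * A).IsHermitian) :
    ∑ j, hA.eigenvalues j = ∑ i, ∑ j, ‖A i j‖ ^ 2 := by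
  apply RCLike.ofReal_injective (K := 𝕜)
  push_cast
  rw [← hA.trace_eq_sum_eigenvalues, trace, sum_comm]
  refine sum_congr rfl fun j _ => ?_
  simp only [diag, mul_apply, conjTranspose_apply, RCLike.star_def, RCLike.conj_mul]

theorem stmt0_general (M K : ℕ) (H : Matrix (Fin M) (Fin K) ℂ)
    (hHerm : (Hᴴ * H).IsHermitian)
    (lam : Fin K → ℝ)
    (hlam : ∀ k, (lam k) ^ 2 = hHerm.eigenvalues k)
    (hFrob : ∑ i : Fin M, ∑ j : Fin K, ‖H i j‖ ^ 2 = (M : ℝ) * K)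
    (pu : ℝ) (hpu : 0 < pu) :
    Real.logb 2 (1 + (M : ℝ) * K * pu) ≤ ∑ k : Fin K, Real.logb 2 (1 + pu * (lam k) ^ 2) ∧
    ∑ k : Fin K, Real.logb 2 (1 + pu * (lam k) ^ 2) ≤ (K : ℝ) * Real.logb 2 (1 + (M : ℝ) * pu) := by
  have hgain : ∀ k ∈ univ, 0 ≤ pu * lam k ^ 2 := fun k _ => by positivity
  have hsum : ∑ k, pu * lam k ^ 2 = #(univ : Finset (Fin K)) * (M * pu) := by
    rw [← mul_sum, funext hlam, hHerm.sum_eigenvalues_conjTranspose_mul_self, hFrob, card_univ,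
      Fintype.card_fin]
    ring
  constructor
  · calc Real.logb 2 (1 + M * K * pu) = Real.logb 2 (1 + ∑ k, pu * lam k ^ 2) := by
          rw [hsum, card_univ, Fintype.card_fin]; ring_nf
      _ ≤ _ := Real.logb_one_add_sum_le_sum_logb_one_add one_lt_two _ hgain
  · simpa using Real.sum_logb_one_add_le_card_mul one_lt_two _ hgain hsum

/-- For an `M × K` complex matrix `H` with `M ≥ K` whose squared Frobenius
norm equals `M * K`, with singular values `λ k` (the square roots of the eigenvalues of
`Hᴴ * H`), the sum-rate `R = ∑ k, log₂ (1 + p_u * (λ k)^2)` satisfies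
`log₂ (1 + M * K * p_u) ≤ R ≤ K * log₂ (1 + M * p_u)`. -/
theorem stmt0 (M K : ℕ) (hMK : K ≤ M) (H : Matrix (Fin M) (Fin K) ℂ)
    (hHerm : (Hᴴ * H).IsHermitian)
    (lam : Fin K → ℝ)
    (hlam_nonneg : ∀ k, 0 ≤ lam k)
    (hlam : ∀ k, (lam k) ^ 2 = hHerm.eigenvalues k)
    (hFrob : ∑ i : Fin M, ∑ j : Fin K, ‖H i j‖ ^ 2 = (M : ℝ) * K)
    (pu : ℝ) (hpu : 0 < pu) :
    Real.logb 2 (1 + (M : ℝ) * K * pu) ≤ ∑ k : Fin K, Real.logb 2 (1 + pu * (lam k) ^ 2) ∧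
    ∑ k : Fin K, Real.logb 2 (1 + pu * (lam k) ^ 2) ≤ (K : ℝ) * Real.logb 2 (1 + (M : ℝ) * pu) :=
  stmt0_general M K H hHerm lam hlam hFrob pu hpu
end

section
/- Imperfect-CSI power scaling for MRC: with p_u = E_u/√M, the lower bound log₂(1 + τ p_u² (M−1) β_k² / (p_u(τ p_u β_k + 1) Σ_{i≠k} β_i + (τ+1) p_u β_k + 1)) converges to log₂(1 + τ β_k² E_u²) as M → ∞. -/
open Filter Finset Topology

/-! With `p_u = E_u/√M` the received power `τ p_u² (M - 1) β_k²` tends to `τ E_u² β_k²`, since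
`p_u² M = E_u²`, while `p_u → 0` drives the interference-plus-noise term to `1`. The rate is
continuous at the limit `1 + τ β_k² E_u² ≠ 0`. -/

theorem tendsto_div_sqrt_natCast (c : ℝ) :
    Tendsto (fun n : ℕ => c / Real.sqrt n) atTop (𝓝 0) :=
  tendsto_const_nhds.div_atTop (Real.tendsto_sqrt_atTop.comp tendsto_natCast_atTop_atTop)

theorem tendsto_div_sqrt_natCast_sq_mul_sub_one (c : ℝ) :
    Tendsto (fun n : ℕ => (c / Real.sqrt n) ^ 2 * ((n : ℝ) - 1)) atTop (𝓝 (c ^ 2)) := by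
  have h : Tendsto (fun n : ℕ => c ^ 2 * (1 - (n : ℝ)⁻¹)) atTop (𝓝 (c ^ 2)) := by
    simpa using (tendsto_inv_atTop_zero.comp tendsto_natCast_atTop_atTop).const_sub 1
      |>.const_mul (c ^ 2)
  refine h.congr' ?_
  filter_upwards [eventually_gt_atTop 0] with n hn
  have hn' : (n : ℝ) ≠ 0 := by positivity
  rw [div_pow, Real.sq_sqrt n.cast_nonneg]
  field_simp

theorem stmt13_general (K : ℕ) (k : Fin K) (β : Fin K → ℝ)
    (τ : ℕ) (Eu : ℝ) :
    Tendsto (fun M : ℕ =>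
        Real.logb 2 (1 +
          (τ : ℝ) * (Eu / Real.sqrt M) ^ 2 * ((M : ℝ) - 1) * (β k) ^ 2
          / ((Eu / Real.sqrt M) * ((τ : ℝ) * (Eu / Real.sqrt M) * β k + 1)
                * ∑ i ∈ univ \ {k}, β i
              + ((τ : ℝ) + 1) * (Eu / Real.sqrt M) * β k + 1)))
      atTop (nhds (Real.logb 2 (1 + (τ : ℝ) * (β k) ^ 2 * Eu ^ 2))) := by
  set S := ∑ i ∈ univ \ {k}, β i
  have hnum : Tendsto (fun M : ℕ => (τ : ℝ) * (Eu / Real.sqrt M) ^ 2 * ((M : ℝ) - 1) * β k ^ 2)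
      atTop (𝓝 ((τ : ℝ) * (β k) ^ 2 * Eu ^ 2)) := by
    convert (tendsto_div_sqrt_natCast_sq_mul_sub_one Eu).const_mul (τ * β k ^ 2 : ℝ)
      using 2 with M
    ring
  have hden : Tendsto (fun M : ℕ => (Eu / Real.sqrt M) * ((τ : ℝ) * (Eu / Real.sqrt M) * β k + 1)
      * S + ((τ : ℝ) + 1) * (Eu / Real.sqrt M) * β k + 1) atTop (𝓝 1) := by
    have hcont : Continuous fun p : ℝ => p * ((τ : ℝ) * p * β k + 1) * S
        + ((τ : ℝ) + 1) * p * β k + 1 := by fun_prop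
    simpa [Function.comp_def] using (hcont.tendsto 0).comp (tendsto_div_sqrt_natCast Eu)
  simpa only [div_one, Pi.div_apply] using
    ((hnum.div hden one_ne_zero).const_add 1).logb (by positivity)

/-- Imperfect-CSI power scaling for MRC. With `p_u = E_u/√M`, the lower
bound `log₂(1 + τ p_u² (M−1) β_k² / (p_u(τ p_u β_k + 1) ∑_{i≠k} β_i + (τ+1) p_u β_k + 1))`
converges to `log₂(1 + τ β_k² E_u²)` as `M → ∞`. -/
theorem stmt13 (K : ℕ) (k : Fin K) (β : Fin K → ℝ) (hβ : ∀ i, 0 < β i)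
    (τ : ℕ) (hτ : 1 ≤ τ) (Eu : ℝ) (hEu : 0 < Eu) :
    Tendsto (fun M : ℕ =>
        Real.logb 2 (1 +
          (τ : ℝ) * (Eu / Real.sqrt M) ^ 2 * ((M : ℝ) - 1) * (β k) ^ 2
          / ((Eu / Real.sqrt M) * ((τ : ℝ) * (Eu / Real.sqrt M) * β k + 1)
                * ∑ i ∈ univ \ {k}, β i
              + ((τ : ℝ) + 1) * (Eu / Real.sqrt M) * β k + 1)))
      atTop (nhds (Real.logb 2 (1 + (τ : ℝ) * (β k) ^ 2 * Eu ^ 2))) :=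
  stmt13_general K k β τ Eu
end

section
/- Imperfect-CSI power scaling for ZF: with p_u = E_u/√M, the lower bound log₂(1 + τ p_u² (M−K) β_k² / ((τ p_u β_k + 1) Σ_{i=1}^K p_u β_i/(τ p_u β_i + 1) + τ p_u β_k + 1)) converges to log₂(1 + τ β_k² E_u²) as M → ∞. -/
/-! With `p = E_u/√M` one has `p² (M - K) → E_u²`, while `p → 0` sends the denominator to its
value `1` at `p = 0`; continuity of `log₂` at `1 + τ β_k² E_u² > 0` finishes. -/

open Filter Finset Topology

lemma tendsto_div_sqrt_natCast_nhds_zero (c : ℝ) :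
    Tendsto (fun M : ℕ => c / √(M : ℝ)) atTop (𝓝 0) :=
  tendsto_const_nhds.div_atTop <| Real.tendsto_sqrt_atTop.comp tendsto_natCast_atTop_atTop

lemma tendsto_div_sqrt_natCast_sq_mul_sub (c a : ℝ) :
    Tendsto (fun M : ℕ => (c / √(M : ℝ)) ^ 2 * ((M : ℝ) - a)) atTop (𝓝 (c ^ 2)) := by
  have h : Tendsto (fun M : ℕ => c ^ 2 * (1 - a / M)) atTop (𝓝 (c ^ 2 * (1 - 0))) :=
    (tendsto_const_nhds.sub (tendsto_const_div_atTop_nhds_zero_nat a)).const_mul _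
  rw [sub_zero, mul_one] at h
  refine h.congr' ?_
  filter_upwards [eventually_gt_atTop 0] with M hM
  rw [div_pow, Real.sq_sqrt (Nat.cast_nonneg M)]
  field_simp

lemma tendsto_mul_sum_div_add_nhds_one {α ι : Type*} {l : Filter α} {p : α → ℝ}
    (hp : Tendsto p l (𝓝 0)) (s : Finset ι) (τ b : ℝ) (β : ι → ℝ) :
    Tendsto (fun x => (τ * p x * b + 1) * ∑ i ∈ s, p x * β i / (τ * p x * β i + 1)
      + τ * p x * b + 1) l (𝓝 1) := by
  have hcont : ContinuousAt (fun q : ℝ => (τ * q * b + 1) * ∑ i ∈ s, q * β i / (τ * q * β i + 1)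
      + τ * q * b + 1) 0 := by
    fun_prop (disch := simp)
  simpa [Function.comp_def] using hcont.tendsto.comp hp

theorem stmt14_general (K : ℕ) (k : Fin K) (β : Fin K → ℝ)
    (τ : ℕ) (Eu : ℝ) :
    Tendsto (fun M : ℕ =>
        Real.logb 2 (1 +
          (τ : ℝ) * (Eu / Real.sqrt M) ^ 2 * ((M : ℝ) - K) * (β k) ^ 2
          / (((τ : ℝ) * (Eu / Real.sqrt M) * β k + 1)
                * ∑ i : Fin K, (Eu / Real.sqrt M) * β i
                    / ((τ : ℝ) * (Eu / Real.sqrt M) * β i + 1)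
              + (τ : ℝ) * (Eu / Real.sqrt M) * β k + 1)))
      atTop (nhds (Real.logb 2 (1 + (τ : ℝ) * (β k) ^ 2 * Eu ^ 2))) := by
  have hnum := ((tendsto_div_sqrt_natCast_sq_mul_sub Eu K).const_mul (τ : ℝ)).mul_const (β k ^ 2)
  have hden := tendsto_mul_sum_div_add_nhds_one (tendsto_div_sqrt_natCast_nhds_zero Eu)
    univ (τ : ℝ) (β k) β
  have hlim := (hnum.div hden one_ne_zero).const_add 1
  refine (Real.continuousAt_logb (by positivity)).tendsto.comp ?_
  convert hlim using 2
  · rw [Pi.div_apply, mul_assoc _ (_ ^ 2)]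
  · ring

/-- Imperfect-CSI power scaling for ZF. With `p_u = E_u/√M`, the lower
bound `log₂(1 + τ p_u² (M−K) β_k² / ((τ p_u β_k + 1) ∑_{i=1}^K p_u β_i/(τ p_u β_i + 1)
+ τ p_u β_k + 1))` converges to `log₂(1 + τ β_k² E_u²)` as `M → ∞`. -/
theorem stmt14 (K : ℕ) (k : Fin K) (β : Fin K → ℝ) (hβ : ∀ i, 0 < β i)
    (τ : ℕ) (hτ : 1 ≤ τ) (Eu : ℝ) (hEu : 0 < Eu) :
    Tendsto (fun M : ℕ =>
        Real.logb 2 (1 +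
          (τ : ℝ) * (Eu / Real.sqrt M) ^ 2 * ((M : ℝ) - K) * (β k) ^ 2
          / (((τ : ℝ) * (Eu / Real.sqrt M) * β k + 1)
                * ∑ i : Fin K, (Eu / Real.sqrt M) * β i
                    / ((τ : ℝ) * (Eu / Real.sqrt M) * β i + 1)
              + (τ : ℝ) * (Eu / Real.sqrt M) * β k + 1)))
      atTop (nhds (Real.logb 2 (1 + (τ : ℝ) * (β k) ^ 2 * Eu ^ 2))) :=
  stmt14_general K k β τ Eu
end

section
/- Sharpness of the √M scaling: if p_u = E_u/M^α with α > 1/2, then the SINR expression τ p_u² (M−1) β_k² / (p_u(τ p_u β_k + 1) Σ_{i≠k} β_i + (τ+1) p_u β_k + 1) tends to 0 as M → ∞; if α < 1/2 it tends to ∞; if α = 1/2 it tends to the finite positive limit τ β_k² E_u². -/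
open Filter Finset Topology

/-!
Writing `p = E_u / M^α`, the SINR equals `τ β_k² E_u² · M^(1-2α) · (1 - 1/M) / D(p)`, where
the denominator `D(p)` is a polynomial in `p` with `D(0) = 1`. Since `p → 0`, the last factor tends
to `1`, so the behaviour is that of `M^(1-2α)`: it tends to `0`, to `∞`, or is identically `1`
according to the sign of `1 - 2α`.
-/

def sinrDenom (τ b S p : ℝ) : ℝ := p * (τ * p * b + 1) * S + (τ + 1) * p * b + 1

lemma tendsto_sinrDenom {ι : Type*} {l : Filter ι} {p : ι → ℝ} (hp : Tendsto p l (𝓝 0))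
    (τ b S : ℝ) : Tendsto (fun i => sinrDenom τ b S (p i)) l (𝓝 1) := by
  have hcont : Continuous (sinrDenom τ b S) := by unfold sinrDenom; fun_prop
  have h1 : sinrDenom τ b S 0 = 1 := by simp [sinrDenom]
  exact h1 ▸ (hcont.tendsto 0).comp hp

lemma sinr_eq_rpow_mul (τ b S E α : ℝ) {x : ℝ} (hx : 0 < x) :
    τ * (E / x ^ α) ^ 2 * (x - 1) * b ^ 2 / sinrDenom τ b S (E / x ^ α)
      = τ * b ^ 2 * E ^ 2 * x ^ (1 - 2 * α) * ((1 - x⁻¹) / sinrDenom τ b S (E / x ^ α)) := by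
  have hsq : (x ^ α) ^ 2 = x ^ (2 * α) := by
    rw [← Real.rpow_natCast, ← Real.rpow_mul hx.le, mul_comm]; norm_num
  have hsplit : x ^ (1 - 2 * α) = x / x ^ (2 * α) := by rw [Real.rpow_sub hx, Real.rpow_one]
  have hpos : 0 < x ^ (2 * α) := Real.rpow_pos_of_pos hx _
  rw [div_pow, hsq, hsplit]
  field_simp

lemma tendsto_mul_rpow_mul_of_neg {ι : Type*} {l : Filter ι} {x r : ι → ℝ}
    (hx : Tendsto x l atTop) (hr : Tendsto r l (𝓝 1)) (c : ℝ) {s : ℝ} (hs : s < 0) :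
    Tendsto (fun i => c * x i ^ s * r i) l (𝓝 0) := by
  have hxs : Tendsto (fun i => x i ^ s) l (𝓝 0) := by
    simpa [Function.comp_def] using (tendsto_rpow_neg_atTop (neg_pos.2 hs)).comp hx
  simpa using (tendsto_const_nhds (x := c)).mul hxs |>.mul hr

lemma tendsto_mul_rpow_mul_of_pos {ι : Type*} {l : Filter ι} {x r : ι → ℝ}
    (hx : Tendsto x l atTop) (hr : Tendsto r l (𝓝 1)) {c : ℝ} (hc : 0 < c) {s : ℝ}
    (hs : 0 < s) : Tendsto (fun i => c * x i ^ s * r i) l atTop :=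
  (((tendsto_rpow_atTop hs).comp hx).const_mul_atTop hc).atTop_mul_pos one_pos hr

/-- Sharpness of the `√M` scaling. With `p_u = E_u/M^α`, the effective SINR
`τ p_u² (M−1) β_k² / (p_u(τ p_u β_k + 1) ∑_{i≠k} β_i + (τ+1) p_u β_k + 1)` tends to `0`
if `α > 1/2`, to `∞` if `α < 1/2`, and to `τ β_k² E_u²` if `α = 1/2`, as `M → ∞`. -/
theorem stmt15 (K : ℕ) (k : Fin K) (β : Fin K → ℝ) (hβ : ∀ i, 0 < β i)
    (τ : ℕ) (hτ : 1 ≤ τ) (Eu : ℝ) (hEu : 0 < Eu) (α : ℝ) (hα : 0 < α)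
    (SINR : ℕ → ℝ)
    (hSINR : ∀ M : ℕ, SINR M =
      (τ : ℝ) * (Eu / (M : ℝ) ^ α) ^ 2 * ((M : ℝ) - 1) * (β k) ^ 2
        / ((Eu / (M : ℝ) ^ α) * ((τ : ℝ) * (Eu / (M : ℝ) ^ α) * β k + 1)
              * ∑ i ∈ univ \ {k}, β i
            + ((τ : ℝ) + 1) * (Eu / (M : ℝ) ^ α) * β k + 1)) :
    (1 / 2 < α → Tendsto SINR atTop (nhds 0)) ∧
    (α < 1 / 2 → Tendsto SINR atTop atTop) ∧
    (α = 1 / 2 → Tendsto SINR atTop (nhds ((τ : ℝ) * (β k) ^ 2 * Eu ^ 2))) := by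
  set S := ∑ i ∈ univ \ {k}, β i
  set r : ℕ → ℝ := fun M => (1 - (M : ℝ)⁻¹) / sinrDenom τ (β k) S (Eu / (M : ℝ) ^ α)
  have hM : Tendsto (fun M : ℕ => (M : ℝ)) atTop atTop := tendsto_natCast_atTop_atTop
  have hp : Tendsto (fun M : ℕ => Eu / (M : ℝ) ^ α) atTop (𝓝 0) :=
    tendsto_const_nhds.div_atTop ((tendsto_rpow_atTop hα).comp hM)
  have hr : Tendsto r atTop (𝓝 1) := by
    have h := ((tendsto_const_nhds (x := (1 : ℝ))).sub (tendsto_inv_atTop_zero.comp hM)).div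
      (tendsto_sinrDenom hp τ (β k) S) one_ne_zero
    rwa [sub_zero, div_one] at h
  have hEq :
      (fun M : ℕ => τ * β k ^ 2 * Eu ^ 2 * (M : ℝ) ^ (1 - 2 * α) * r M) =ᶠ[atTop] SINR := by
    filter_upwards [eventually_gt_atTop 0] with M hM0
    rw [hSINR M]
    exact (sinr_eq_rpow_mul _ _ _ _ _ (Nat.cast_pos.2 hM0)).symm
  refine ⟨fun h => ?_, fun h => ?_, fun h => ?_⟩
  · exact (tendsto_mul_rpow_mul_of_neg hM hr _ (by linarith)).congr' hEq
  · have hτ0 : (0 : ℝ) < τ := by exact_mod_cast hτ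
    have hβk := hβ k
    exact (tendsto_mul_rpow_mul_of_pos hM hr (by positivity) (by linarith)).congr' hEq
  · refine Tendsto.congr' hEq ?_
    simpa [show 1 - 2 * α = 0 by linarith] using
      (tendsto_const_nhds (x := τ * β k ^ 2 * Eu ^ 2)).mul hr
end

section
/- Low-power quadratic behavior of MRC rate: for R(p) = ((T−τ)/T) K log₂(1 + τ(M−1)p²/(τ(K−1)p² + (K+τ)p + 1)), one has R(0) = 0, R′(0) = 0, and R″(0) = 2 ((T−τ)/T) K (log₂ e) τ (M−1); equivalently R(p)/p² → ((T−τ)/T) K (log₂ e) τ (M−1) as p → 0⁺. -/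
/-!
Write `R(p) = c · log₂(1 + a p² / D(p))` with `D(p) = b p² + d p + 1`, and put
`N(p) = D(p) + a p²`, so that near `0` the rate is `c / log 2 · (log N(p) - log D(p))`.
Its derivative `N'/N - D'/D` vanishes at `0` because `N` and `D` agree to first order, and
differentiating `(2Bp + d)/(Bp² + dp + 1)` at `0` gives `2B - d²`, so the second derivative
at `0` is `c / log 2 · 2a`. The limit of `R(p)/p²` then follows from L'Hôpital's rule applied
to `R(p)` and `p²`.
-/

open Filter Topology

theorem deriv_deriv_eq_of_eventually_hasDerivAt {f f' : ℝ → ℝ} {x L : ℝ}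
    (hf : ∀ᶠ y in 𝓝 x, HasDerivAt f (f' y) y) (hf' : HasDerivAt f' L x) :
    deriv (deriv f) x = L := by
  have hderiv : deriv f =ᶠ[𝓝 x] f' := hf.mono fun _ h => h.deriv
  rw [hderiv.deriv_eq, hf'.deriv]

theorem tendsto_div_sq_nhdsGT_of_hasDerivAt {f f' : ℝ → ℝ} {L : ℝ} (hf0 : f 0 = 0)
    (hf : ∀ᶠ x in 𝓝 0, HasDerivAt f (f' x) x) (hf'0 : f' 0 = 0) (hf' : HasDerivAt f' L 0) :
    Tendsto (fun x => f x / x ^ 2) (𝓝[>] 0) (𝓝 (L / 2)) := by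
  have hslope : Tendsto (fun x => f' x / x) (𝓝[>] 0) (𝓝 L) := by
    refine ((hasDerivAt_iff_tendsto_slope.mp hf').mono_left
      (nhdsWithin_mono _ fun x (hx : 0 < x) => hx.ne')).congr fun x => ?_
    simp [slope_def_field, hf'0]
  have hf_lim : Tendsto f (𝓝[>] 0) (𝓝 0) := by
    simpa [hf0] using hf.self_of_nhds.continuousAt.tendsto.mono_left nhdsWithin_le_nhds
  have hsq_lim : Tendsto (fun x : ℝ => x ^ 2) (𝓝[>] 0) (𝓝 0) := by
    simpa using ((continuous_pow 2).tendsto (0 : ℝ)).mono_left nhdsWithin_le_nhds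
  refine HasDerivAt.lhopital_zero_nhdsGT (hf.filter_mono nhdsWithin_le_nhds)
    (Eventually.of_forall fun x => by simpa using hasDerivAt_pow 2 x)
    (eventually_nhdsWithin_of_forall fun x (hx : 0 < x) => by positivity)
    hf_lim hsq_lim ((hslope.div_const 2).congr fun x => ?_)
  ring

section Quadratic

variable (B d : ℝ)

theorem hasDerivAt_quadratic (p : ℝ) :
    HasDerivAt (fun q : ℝ => B * q ^ 2 + d * q + 1) (2 * B * p + d) p := by
  have h := (((hasDerivAt_pow 2 p).const_mul B).add ((hasDerivAt_id' p).const_mul d)).add_const 1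
  exact h.congr_deriv (by simp; ring)

theorem eventually_quadratic_pos : ∀ᶠ p in 𝓝 (0 : ℝ), 0 < B * p ^ 2 + d * p + 1 := by
  have hcont : ContinuousAt (fun p : ℝ => B * p ^ 2 + d * p + 1) 0 := by fun_prop
  exact hcont.eventually (eventually_gt_nhds (by norm_num))

theorem hasDerivAt_log_quadratic {p : ℝ} (hp : B * p ^ 2 + d * p + 1 ≠ 0) :
    HasDerivAt (fun q => Real.log (B * q ^ 2 + d * q + 1))
      ((2 * B * p + d) / (B * p ^ 2 + d * p + 1)) p :=
  (hasDerivAt_quadratic B d p).log hp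

theorem hasDerivAt_logDeriv_quadratic_zero :
    HasDerivAt (fun p => (2 * B * p + d) / (B * p ^ 2 + d * p + 1)) (2 * B - d ^ 2) 0 := by
  have hlin : HasDerivAt (fun q : ℝ => 2 * B * q + d) (2 * B) 0 := by
    simpa using ((hasDerivAt_id' (0 : ℝ)).const_mul (2 * B)).add_const d
  exact (hlin.div (hasDerivAt_quadratic B d 0) (by norm_num)).congr_deriv (by simp; ring)

end Quadratic

theorem hasDerivAt_log_one_add_div_quadratic (a b d : ℝ) :
    ∀ᶠ p in 𝓝 (0 : ℝ),
      HasDerivAt (fun q => Real.log (1 + a * q ^ 2 / (b * q ^ 2 + d * q + 1)))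
      ((2 * (a + b) * p + d) / ((a + b) * p ^ 2 + d * p + 1)
        - (2 * b * p + d) / (b * p ^ 2 + d * p + 1)) p := by
  have hEq : (fun q => Real.log (1 + a * q ^ 2 / (b * q ^ 2 + d * q + 1))) =ᶠ[𝓝 0]
      fun q => Real.log ((a + b) * q ^ 2 + d * q + 1) - Real.log (b * q ^ 2 + d * q + 1) := by
    filter_upwards [eventually_quadratic_pos b d, eventually_quadratic_pos (a + b) d]
      with q hD hN
    rw [← Real.log_div hN.ne' hD.ne', one_add_div hD.ne']
    congr 1
    ring
  filter_upwards [hEq.eventuallyEq_nhds, eventually_quadratic_pos b d,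
    eventually_quadratic_pos (a + b) d] with p hEq_p hD hN
  exact ((hasDerivAt_log_quadratic (a + b) d hN.ne').sub
    (hasDerivAt_log_quadratic b d hD.ne')).congr_of_eventuallyEq hEq_p

theorem stmt17_general (M K τ T : ℕ)
    (R : ℝ → ℝ)
    (hR : ∀ p : ℝ, R p = (((T : ℝ) - τ) / T) * K *
      Real.logb 2 (1 + (τ : ℝ) * ((M : ℝ) - 1) * p ^ 2
        / ((τ : ℝ) * ((K : ℝ) - 1) * p ^ 2 + ((K : ℝ) + τ) * p + 1))) :
    R 0 = 0 ∧ deriv R 0 = 0 ∧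
    deriv (deriv R) 0
      = 2 * ((((T : ℝ) - τ) / T) * K * Real.logb 2 (Real.exp 1) * τ * ((M : ℝ) - 1)) ∧
    Tendsto (fun p => R p / p ^ 2) (nhdsWithin 0 (Set.Ioi 0))
      (nhds ((((T : ℝ) - τ) / T) * K * Real.logb 2 (Real.exp 1) * τ * ((M : ℝ) - 1))) := by
  set c := ((T : ℝ) - τ) / T * K
  set a := (τ : ℝ) * ((M : ℝ) - 1)
  set b := (τ : ℝ) * ((K : ℝ) - 1)
  set d := (K : ℝ) + τ
  have hlogb : Real.logb 2 (Real.exp 1) = 1 / Real.log 2 := by simp [Real.logb]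
  have hR0 : R 0 = 0 := by simp [hR]
  have hderiv : ∀ᶠ p in 𝓝 (0 : ℝ), HasDerivAt R (c / Real.log 2 *
      ((2 * (a + b) * p + d) / ((a + b) * p ^ 2 + d * p + 1)
        - (2 * b * p + d) / (b * p ^ 2 + d * p + 1))) p := by
    have hR' : R = fun p =>
        c / Real.log 2 * Real.log (1 + a * p ^ 2 / (b * p ^ 2 + d * p + 1)) := by
      funext p; rw [hR, Real.logb]; ring
    rw [hR']
    exact (hasDerivAt_log_one_add_div_quadratic a b d).mono fun p h => h.const_mul _
  have hderiv0 : c / Real.log 2 * ((2 * (a + b) * 0 + d) / ((a + b) * 0 ^ 2 + d * 0 + 1)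
      - (2 * b * 0 + d) / (b * 0 ^ 2 + d * 0 + 1)) = 0 := by simp
  have hderiv2 := ((hasDerivAt_logDeriv_quadratic_zero (a + b) d).sub
    (hasDerivAt_logDeriv_quadratic_zero b d)).const_mul (c / Real.log 2)
  refine ⟨hR0, hderiv.self_of_nhds.deriv.trans hderiv0, ?_, ?_⟩
  · rw [deriv_deriv_eq_of_eventually_hasDerivAt hderiv hderiv2, hlogb]; ring
  · convert tendsto_div_sq_nhdsGT_of_hasDerivAt hR0 hderiv hderiv0 hderiv2 using 2
    rw [hlogb]; ring

/-- Low-power quadratic behavior of the MRC rate. For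
`R(p) = ((T−τ)/T) K log₂(1 + τ(M−1)p²/(τ(K−1)p² + (K+τ)p + 1))`, one has `R(0) = 0`,
`R′(0) = 0`, `R″(0) = 2 ((T−τ)/T) K (log₂ e) τ (M−1)`; equivalently
`R(p)/p² → ((T−τ)/T) K (log₂ e) τ (M−1)` as `p → 0⁺`. -/
theorem stmt17 (M K τ T : ℕ) (hM : 2 ≤ M) (hK : 1 ≤ K) (hτ : 1 ≤ τ) (hτT : τ < T)
    (R : ℝ → ℝ)
    (hR : ∀ p : ℝ, R p = (((T : ℝ) - τ) / T) * K *
      Real.logb 2 (1 + (τ : ℝ) * ((M : ℝ) - 1) * p ^ 2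
        / ((τ : ℝ) * ((K : ℝ) - 1) * p ^ 2 + ((K : ℝ) + τ) * p + 1))) :
    R 0 = 0 ∧ deriv R 0 = 0 ∧
    deriv (deriv R) 0
      = 2 * ((((T : ℝ) - τ) / T) * K * Real.logb 2 (Real.exp 1) * τ * ((M : ℝ) - 1)) ∧
    Tendsto (fun p => R p / p ^ 2) (nhdsWithin 0 (Set.Ioi 0))
      (nhds ((((T : ℝ) - τ) / T) * K * Real.logb 2 (Real.exp 1) * τ * ((M : ℝ) - 1))) :=
  stmt17_general M K τ T R hR
end

section
/- Low-power energy–spectral efficiency relation: in the limit p → 0⁺, the MRC energy efficiency η(p) = R(p)/p and spectral efficiency R(p) satisfy η(p)/√(R(p)) → √(((T−τ)/T) K (log₂ e) τ (M−1)), so that asymptotically η = √(c·R) with c = ((T−τ)/T) K (log₂ e) τ (M−1). -/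
/-!
Writing `log (1 + y) = y · dslope log 1 (1 + y)` with `dslope log 1` continuous at `1` (where it
equals `log' 1 = 1`) shows `R(p) / p² → c` as `p → 0`, since the argument of the logarithm is
`p²` times a quotient tending to `τ(M−1)`. For `p > 0` one has `η / √R = √(R / p²)` identically
(for `R ≤ 0` both sides are `0`), so the claim follows from continuity of `√`.
-/

open Filter Topology

theorem Real.div_div_sqrt_eq_sqrt_div_sq (r : ℝ) {p : ℝ} (hp : 0 ≤ p) :
    r / p / √r = √(r / p ^ 2) := by
  rcases le_or_gt r 0 with hr | hr
  · rw [Real.sqrt_eq_zero_of_nonpos hr, div_zero,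
      Real.sqrt_eq_zero_of_nonpos (div_nonpos_of_nonpos_of_nonneg hr (sq_nonneg p))]
  · rw [Real.sqrt_div' _ (sq_nonneg p), Real.sqrt_sq hp, div_right_comm, Real.div_sqrt]

theorem Real.log_one_add_eq_mul_dslope (y : ℝ) :
    Real.log (1 + y) = y * dslope Real.log 1 (1 + y) := by
  have h := sub_smul_dslope Real.log 1 (1 + y)
  rw [add_sub_cancel_left, Real.log_one, sub_zero, smul_eq_mul] at h
  exact h.symm

theorem Real.tendsto_log_one_add_div_sq {D : ℝ → ℝ} (hD : Tendsto D (𝓝 0) (𝓝 1)) (a : ℝ) :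
    Tendsto (fun p => Real.log (1 + a * p ^ 2 / D p) / p ^ 2) (𝓝[≠] 0) (𝓝 a) := by
  have hx : Tendsto (fun p => 1 + a * p ^ 2 / D p) (𝓝 0) (𝓝 1) := by
    simpa using tendsto_const_nhds.add
      (((tendsto_const_nhds.mul ((continuous_pow 2).tendsto' 0 0 (by simp)))).div hD one_ne_zero)
  have hslope : ContinuousAt (dslope Real.log 1) 1 :=
    continuousAt_dslope_same.mpr (Real.differentiableAt_log one_ne_zero)
  have hlim : Tendsto (fun p => a / D p * dslope Real.log 1 (1 + a * p ^ 2 / D p)) (𝓝 0)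
      (𝓝 (a / 1 * dslope Real.log 1 1)) :=
    (tendsto_const_nhds.div hD one_ne_zero).mul (hslope.tendsto.comp hx)
  rw [dslope_same, Real.deriv_log, inv_one, div_one, mul_one] at hlim
  refine (hlim.mono_left nhdsWithin_le_nhds).congr' ?_
  filter_upwards [self_mem_nhdsWithin] with p hp
  rw [Real.log_one_add_eq_mul_dslope, mul_div_right_comm (a * p ^ 2 / D p), div_right_comm,
    mul_div_cancel_right₀ _ (pow_ne_zero 2 hp)]

theorem stmt18_general (M K τ T : ℕ)
    (R η : ℝ → ℝ)
    (hR : ∀ p : ℝ, R p = (((T : ℝ) - τ) / T) * K *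
      Real.logb 2 (1 + (τ : ℝ) * ((M : ℝ) - 1) * p ^ 2
        / ((τ : ℝ) * ((K : ℝ) - 1) * p ^ 2 + ((K : ℝ) + τ) * p + 1)))
    (hη : ∀ p : ℝ, η p = R p / p) :
    Tendsto (fun p => η p / Real.sqrt (R p)) (nhdsWithin 0 (Set.Ioi 0))
      (nhds (Real.sqrt ((((T : ℝ) - τ) / T) * K * Real.logb 2 (Real.exp 1) * τ * ((M : ℝ) - 1)))) := by
  have hD : Tendsto (fun p : ℝ => (τ : ℝ) * ((K : ℝ) - 1) * p ^ 2 + ((K : ℝ) + τ) * p + 1)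
      (𝓝 0) (𝓝 1) :=
    (by fun_prop : Continuous _).tendsto' 0 1 (by simp)
  have hlog := (Real.tendsto_log_one_add_div_sq hD (τ * ((M : ℝ) - 1))).mono_left
    (nhdsGT_le_nhdsNE 0)
  have hRsq : Tendsto (fun p => R p / p ^ 2) (𝓝[>] 0)
      (𝓝 ((((T : ℝ) - τ) / T) * K * Real.logb 2 (Real.exp 1) * τ * ((M : ℝ) - 1))) := by
    convert hlog.const_mul ((((T : ℝ) - τ) / T) * K / Real.log 2) using 1
    · ext p
      rw [hR, Real.logb]
      ring
    · rw [Real.logb, Real.log_exp]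
      congr 1
      ring
  refine ((Real.continuous_sqrt.tendsto _).comp hRsq).congr' ?_
  filter_upwards [self_mem_nhdsWithin] with p hp
  rw [Function.comp_apply, hη, Real.div_div_sqrt_eq_sqrt_div_sq _ hp.le]

/-- Low-power energy–spectral efficiency relation. In the limit `p → 0⁺`,
`η(p)/√(R(p)) → √c` where `c = ((T−τ)/T) K (log₂ e) τ (M−1)`, i.e. asymptotically
`η = √(c R)`. -/
theorem stmt18 (M K τ T : ℕ) (hM : 2 ≤ M) (hK : 1 ≤ K) (hτ : 1 ≤ τ) (hτT : τ < T)
    (R η : ℝ → ℝ)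
    (hR : ∀ p : ℝ, R p = (((T : ℝ) - τ) / T) * K *
      Real.logb 2 (1 + (τ : ℝ) * ((M : ℝ) - 1) * p ^ 2
        / ((τ : ℝ) * ((K : ℝ) - 1) * p ^ 2 + ((K : ℝ) + τ) * p + 1)))
    (hη : ∀ p : ℝ, η p = R p / p) :
    Tendsto (fun p => η p / Real.sqrt (R p)) (nhdsWithin 0 (Set.Ioi 0))
      (nhds (Real.sqrt ((((T : ℝ) - τ) / T) * K * Real.logb 2 (Real.exp 1) * τ * ((M : ℝ) - 1)))) :=
  stmt18_general M K τ T R η hR hη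
end
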